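/- Let K_1, K_2 be convex bodies in ℝ^d with K_2 contained in the interior of K_1, and let X be a finite point set in K_1. Then L(X) ≤ max{|X ∩ C| : C a cap of K_1 \ K_2} + L(X ∩ K_2), where a cap of K_1 \ K_2 is a set of the form K_1 ∩ H^+ for H^+ a closed halfspace whose bounding hyperplane is tangent to K_2 (i.e., touches the boundary of K_2 and whose interior is disjoint from K_2). -/

import Mathlib

open scoped Classical RealInnerProductSpace
open Metric MeasureTheory

/-- The set of extreme points (convex-layer vertices) of a finite point set. -/
noncomputable def extremePts {d : ℕ} (S : Finset (EuclideanSpace ℝ (Fin d))) :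
    Finset (EuclideanSpace ℝ (Fin d)) :=
  S.filter fun x =>
    x ∉ convexHull ℝ ((S.erase x : Finset (EuclideanSpace ℝ (Fin d))) :
      Set (EuclideanSpace ℝ (Fin d)))

/-- `peel S k` is the set of points remaining after `k` peeling steps, i.e. `X_{k+1}`. -/
noncomputable def peel {d : ℕ} (S : Finset (EuclideanSpace ℝ (Fin d))) :
    ℕ → Finset (EuclideanSpace ℝ (Fin d))
  | 0 => S
  | k + 1 => peel S k \ extremePts (peel S k)

/-- The layer number: the number of peeling steps needed to remove all points. -/
noncomputable def layerNum {d : ℕ} (S : Finset (EuclideanSpace ℝ (Fin d))) : ℕ :=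
  sInf {k | peel S k = ∅}

/-
Each peeling step removes a maximiser of any given linear functional, so it strictly decreases
the number of remaining points in every closed halfspace that still contains one of them. A point
outside `K₂` is separated from `K₂` by a hyperplane tangent to `K₂` whose cap holds at most `m`
points, so no such point survives `m` steps. What remains lies in `X ∩ K₂`, and as peeling is
monotone under inclusion it is exhausted after `L(X ∩ K₂)` further steps.
-/

section SupportingHyperplane

variable {E : Type*} [NormedAddCommGroup E] [InnerProductSpace ℝ E] [CompleteSpace E]

theorem exists_tangent_halfspace_separating {K : Set E} (hKcpt : IsCompact K)
    (hKcvx : Convex ℝ K) (hKne : K.Nonempty) {x : E} (hx : x ∉ K) :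
    ∃ u : E, u ≠ 0 ∧ ∃ p ∈ frontier K, (∀ q ∈ K, ⟪q, u⟫ ≤ ⟪p, u⟫) ∧ ⟪p, u⟫ < ⟪x, u⟫ := by
  obtain ⟨f, s, hfK, hsx⟩ := geometric_hahn_banach_closed_point hKcvx hKcpt.isClosed hx
  obtain ⟨p, hpK, hpmax⟩ := hKcpt.exists_isMaxOn hKne f.continuous.continuousOn
  have hfp : f p < f x := (hfK p hpK).trans hsx
  -- a linear functional attaining a local maximum vanishes, which `hfp` rules out
  have hp_fr : p ∈ frontier K := by
    refine ⟨subset_closure hpK, fun hp_int => hfp.ne ?_⟩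
    have := (hpmax.isLocalMax (mem_interior_iff_mem_nhds.1 hp_int)).hasFDerivAt_eq_zero
      f.hasFDerivAt
    simp [this]
  set u := (InnerProductSpace.toDual ℝ E).symm f
  have hu : ∀ z, ⟪z, u⟫ = f z := fun z => by
    rw [real_inner_comm]; exact InnerProductSpace.toDual_symm_apply
  refine ⟨u, fun hu0 => hfp.ne ?_, p, hp_fr, fun q hq => ?_, by rwa [hu, hu]⟩
  · rw [← hu, ← hu, hu0, inner_zero_right, inner_zero_right]
  · rw [hu, hu]; exact hpmax hq

end SupportingHyperplane

variable {d : ℕ}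

local notation "𝔼" => EuclideanSpace ℝ (Fin d)

theorem exists_mem_extremePts_forall_inner_le {S : Finset 𝔼} (hS : S.Nonempty) (u : 𝔼) :
    ∃ y ∈ extremePts S, ∀ z ∈ S, ⟪z, u⟫ ≤ ⟪y, u⟫ := by
  set A := convexHull ℝ (S : Set 𝔼)
  have hA : IsCompact A := S.finite_toSet.isCompact_convexHull ℝ
  have hF : IsExposed ℝ A ((innerSL ℝ u).toExposed A) := ContinuousLinearMap.toExposed.isExposed
  obtain ⟨z, hzA, hz⟩ :=
    hA.exists_isMaxOn (Finset.coe_nonempty.2 hS).convexHull (innerSL ℝ u).continuous.continuousOn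
  -- an extreme point of the face of `A` where `⟪·, u⟫` is maximal is extreme in `A`
  obtain ⟨y, hyF⟩ := (hF.isCompact hA).extremePoints_nonempty ⟨z, hzA, fun w hw => hz hw⟩
  have hyA : y ∈ A.extremePoints ℝ := hF.isExtreme.extremePoints_subset_extremePoints hyF
  refine ⟨y, Finset.mem_filter.2 ⟨extremePoints_convexHull_subset hyA, fun hy => ?_⟩,
    fun z hz => ?_⟩
  · refine ((convex_convexHull ℝ _).mem_extremePoints_iff_mem_sdiff_convexHull_sdiff.1 hyA).2
      (convexHull_mono (fun w hw => ?_) hy)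
    rw [Finset.coe_erase] at hw
    exact ⟨subset_convexHull ℝ _ hw.1, hw.2⟩
  · simpa [real_inner_comm] using hyF.1.2 z (subset_convexHull ℝ _ hz)

theorem card_filter_sdiff_extremePts_lt {T : Finset 𝔼} {u x : 𝔼} {c : ℝ} (hx : x ∈ T)
    (hxc : c ≤ ⟪x, u⟫) :
    ((T \ extremePts T).filter fun z => c ≤ ⟪z, u⟫).card <
      (T.filter fun z => c ≤ ⟪z, u⟫).card := by
  obtain ⟨y, hy, hymax⟩ := exists_mem_extremePts_forall_inner_le ⟨x, hx⟩ u
  refine Finset.card_lt_card <| (Finset.ssubset_iff_of_subset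
    (Finset.filter_subset_filter _ Finset.sdiff_subset)).2 ⟨y, ?_, fun hy' => ?_⟩
  · exact Finset.mem_filter.2 ⟨(Finset.mem_filter.1 hy).1, hxc.trans (hymax x hx)⟩
  · exact (Finset.mem_sdiff.1 (Finset.mem_filter.1 hy').1).2 hy

theorem peel_succ (S : Finset 𝔼) (k : ℕ) : peel S (k + 1) = peel S k \ extremePts (peel S k) :=
  rfl

theorem peel_succ_subset (S : Finset 𝔼) (k : ℕ) : peel S (k + 1) ⊆ peel S k :=
  Finset.sdiff_subset

theorem peel_subset (S : Finset 𝔼) (k : ℕ) : peel S k ⊆ S :=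
  antitone_nat_of_succ_le (peel_succ_subset S) (Nat.zero_le k)

theorem peel_add (S : Finset 𝔼) (m k : ℕ) : peel S (m + k) = peel (peel S m) k := by
  induction k with
  | zero => rfl
  | succ k ih => rw [← add_assoc, peel_succ, ih, peel_succ]

theorem peel_mono {S T : Finset 𝔼} (h : S ⊆ T) (k : ℕ) : peel S k ⊆ peel T k := by
  induction k with
  | zero => exact h
  | succ k ih =>
    intro x hx
    obtain ⟨hxS, hx_ext⟩ := Finset.mem_sdiff.1 hx
    have hx_hull : x ∈ convexHull ℝ ((peel S k).erase x : Set 𝔼) :=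
      by_contra fun h' => hx_ext (Finset.mem_filter.2 ⟨hxS, h'⟩)
    refine Finset.mem_sdiff.2 ⟨ih hxS, fun hxT => (Finset.mem_filter.1 hxT).2 ?_⟩
    exact convexHull_mono (by exact_mod_cast Finset.erase_subset_erase x ih) hx_hull

theorem card_filter_peel_add_le {S : Finset 𝔼} {u x : 𝔼} {c : ℝ} {k : ℕ} (hx : x ∈ peel S k)
    (hxc : c ≤ ⟪x, u⟫) :
    ((peel S k).filter fun z => c ≤ ⟪z, u⟫).card + k ≤ (S.filter fun z => c ≤ ⟪z, u⟫).card := by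
  induction k with
  | zero => rfl
  | succ k ih =>
    have hxk := peel_succ_subset S k hx
    have := card_filter_sdiff_extremePts_lt hxk hxc
    have := ih hxk
    rw [peel_succ]
    omega

theorem lt_card_filter_of_mem_peel {S : Finset 𝔼} {u x : 𝔼} {c : ℝ} {k : ℕ}
    (hx : x ∈ peel S k) (hxc : c ≤ ⟪x, u⟫) : k < (S.filter fun z => c ≤ ⟪z, u⟫).card := by
  have := card_filter_peel_add_le hx hxc
  have : 0 < ((peel S k).filter fun z => c ≤ ⟪z, u⟫).card :=
    Finset.card_pos.2 ⟨x, Finset.mem_filter.2 ⟨hx, hxc⟩⟩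
  omega

theorem peel_card_eq_empty (S : Finset 𝔼) : peel S S.card = ∅ :=
  Finset.eq_empty_of_forall_notMem fun _ hx =>
    (lt_card_filter_of_mem_peel (u := 0) (c := 0) hx (by simp)).not_ge
      (Finset.card_filter_le _ _)

theorem peel_layerNum (S : Finset 𝔼) : peel S (layerNum S) = ∅ :=
  Nat.sInf_mem (s := {k | peel S k = ∅}) ⟨S.card, peel_card_eq_empty S⟩

theorem layerNum_le_add_of_peel_subset {S T : Finset 𝔼} {m : ℕ} (h : peel S m ⊆ T) :
    layerNum S ≤ m + layerNum T := by
  refine Nat.sInf_le (show peel S (m + layerNum T) = ∅ from ?_)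
  rw [peel_add, ← Finset.subset_empty, ← peel_layerNum T]
  exact peel_mono h _

theorem peel_subset_filter_mem_of_cap_card_le {K : Set 𝔼} (hKcpt : IsCompact K)
    (hKcvx : Convex ℝ K) (hKne : K.Nonempty) {X : Finset 𝔼} {m : ℕ}
    (hm : ∀ u : 𝔼, u ≠ 0 → ∀ c : ℝ, (∃ p ∈ frontier K, ⟪p, u⟫ = c) → (∀ q ∈ K, ⟪q, u⟫ ≤ c) →
      (X.filter fun x => c ≤ ⟪x, u⟫).card ≤ m) :
    peel X m ⊆ X.filter fun x => x ∈ K := by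
  intro x hx
  refine Finset.mem_filter.2 ⟨peel_subset X m hx, by_contra fun hxK => ?_⟩
  obtain ⟨u, hu, p, hp, hpK, hpx⟩ := exists_tangent_halfspace_separating hKcpt hKcvx hKne hxK
  exact (lt_card_filter_of_mem_peel hx hpx.le).not_ge (hm u hu _ ⟨p, hp, rfl⟩ hpK)

theorem layerNum_le_cap_bound_general {d : ℕ} (K₂ : Set (EuclideanSpace ℝ (Fin d)))
    (hK₂cpt : IsCompact K₂) (hK₂cvx : Convex ℝ K₂) (hK₂int : (interior K₂).Nonempty)
    (X : Finset (EuclideanSpace ℝ (Fin d)))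
    (m : ℕ)
    -- every cap `K₁ ∩ {x : c ≤ ⟪x,u⟫}` of `K₁ \ K₂`, i.e. whose bounding hyperplane
    -- touches the boundary of `K₂` and whose open halfspace misses `K₂`,
    -- contains at most `m` points of `X`:
    (hm : ∀ (u : EuclideanSpace ℝ (Fin d)), u ≠ 0 → ∀ c : ℝ,
      (∃ p ∈ frontier K₂, ⟪p, u⟫ = c) →
      (∀ q ∈ K₂, ⟪q, u⟫ ≤ c) →
      (X.filter fun x => c ≤ ⟪x, u⟫).card ≤ m) :
    layerNum X ≤ m + layerNum (X.filter fun x => x ∈ K₂) :=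
  layerNum_le_add_of_peel_subset <|
    peel_subset_filter_mem_of_cap_card_le hK₂cpt hK₂cvx (hK₂int.mono interior_subset) hm

theorem layerNum_le_cap_bound {d : ℕ} (K₁ K₂ : Set (EuclideanSpace ℝ (Fin d)))
    (hK₁cpt : IsCompact K₁) (hK₁cvx : Convex ℝ K₁) (hK₁int : (interior K₁).Nonempty)
    (hK₂cpt : IsCompact K₂) (hK₂cvx : Convex ℝ K₂) (hK₂int : (interior K₂).Nonempty)
    (hsub : K₂ ⊆ interior K₁)
    (X : Finset (EuclideanSpace ℝ (Fin d))) (hX : ∀ x ∈ X, x ∈ K₁)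
    (m : ℕ)
    -- every cap `K₁ ∩ {x : c ≤ ⟪x,u⟫}` of `K₁ \ K₂`, i.e. whose bounding hyperplane
    -- touches the boundary of `K₂` and whose open halfspace misses `K₂`,
    -- contains at most `m` points of `X`:
    (hm : ∀ (u : EuclideanSpace ℝ (Fin d)), u ≠ 0 → ∀ c : ℝ,
      (∃ p ∈ frontier K₂, ⟪p, u⟫ = c) →
      (∀ q ∈ K₂, ⟪q, u⟫ ≤ c) →
      (X.filter fun x => c ≤ ⟪x, u⟫).card ≤ m) :
    layerNum X ≤ m + layerNum (X.filter fun x => x ∈ K₂) :=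
  layerNum_le_cap_bound_general K₂ hK₂cpt hK₂cvx hK₂int X m hm
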